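/- arXiv:2007.13386 — 2 statements merged into one kernel-verified Lean document; each statement's English description precedes it below -/
import Mathlib

section
/- Fix an integer d ≥ 3, a bounded domain D ⊂ ℝ^d, and δ ∈ (0, 2/(d−2)]. There exists a constant C = C(d, D) such that for every ε ∈ (0,1), one has ε^d E[ Σ_{z ∈ J^ε_b} ρ_z^{d−2} ] ≤ C ε^{(2/(d−2) − δ)β}. -/
/-!
On `J^ε_b` the mark satisfies `ρ_z ≥ ε^{-(2/(d-2) - δ)}`, so the truncation inequality
`x^{d-2} ≤ s^{-β} x^{d-2+β}` for `x ≥ s` gives `ρ_z^{d-2} ≤ ε^{(2/(d-2) - δ)β} ρ_z^{d-2+β}`.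
Each of these terms has expectation at most `ε^{(2/(d-2) - δ)β}` by the moment bound, and since
`D` is bounded, `Φ^ε(D)` lies in a box of `O(ε^{-d})` lattice points.
-/

open Metric Set Bornology MeasureTheory ProbabilityTheory

noncomputable section

/-- Embedding of the lattice `ℤ^d` into `ℝ^d` (with the Euclidean norm). -/
def latt (d : ℕ) (z : Fin d → ℤ) : EuclideanSpace ℝ (Fin d) :=
  (WithLp.equiv 2 (Fin d → ℝ)).symm fun i => (z i : ℝ)

/-- `Φ^ε(D) := {z ∈ ℤ^d : εz ∈ D}`. -/
def PhiEps (d : ℕ) (D : Set (EuclideanSpace ℝ (Fin d))) (ε : ℝ) : Set (Fin d → ℤ) :=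
  {z | ε • latt d z ∈ D}

/-- `J^ε_b := {z ∈ Φ^ε(D) : ε^{d/(d−2)} ρ_z ≥ ε^{1+δ}}`. -/
def Jb (d : ℕ) (D : Set (EuclideanSpace ℝ (Fin d))) (ε δ : ℝ) (ρ : (Fin d → ℤ) → ℝ) :
    Set (Fin d → ℤ) :=
  {z ∈ PhiEps d D ε | ε ^ (1 + δ) ≤ ε ^ ((d : ℝ) / ((d : ℝ) - 2)) * ρ z}

lemma Real.rpow_le_rpow_neg_mul_rpow_add {s x q β : ℝ} (hs : 0 < s) (hsx : s ≤ x) (hβ : 0 ≤ β) :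
    x ^ q ≤ s ^ (-β) * x ^ (q + β) := by
  have hx : 0 < x := hs.trans_le hsx
  rw [Real.rpow_neg hs.le, Real.rpow_add hx, ← div_eq_inv_mul, le_div_iff₀ (by positivity)]
  gcongr

lemma integrable_and_integral_le_one_of_lintegral_ofReal_le_one {α : Type*} [MeasurableSpace α]
    {μ : Measure α} {f : α → ℝ} (hf : 0 ≤ᵐ[μ] f) (hfm : AEStronglyMeasurable f μ)
    (h : ∫⁻ x, ENNReal.ofReal (f x) ∂μ ≤ 1) : Integrable f μ ∧ ∫ x, f x ∂μ ≤ 1 := by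
  refine ⟨⟨hfm, ?_⟩, ?_⟩
  · rw [hasFiniteIntegral_iff_ofReal hf]
    exact h.trans_lt ENNReal.one_lt_top
  · rw [integral_eq_lintegral_of_nonneg_ae hf hfm]
    exact ENNReal.toReal_le_of_le_ofReal zero_le_one (by simpa using h)

lemma integral_tsum_le_sum_integral {ι Ω : Type*} [MeasurableSpace Ω] {P : Measure Ω}
    {f g : ι → Ω → ℝ} (S : Finset ι) (hf : ∀ i ω, 0 ≤ f i ω) (hfS : ∀ ω, ∀ i ∉ S, f i ω = 0)
    (hfg : ∀ i ω, f i ω ≤ g i ω) (hg : ∀ i, Integrable (g i) P) :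
    ∫ ω, ∑' i, f i ω ∂P ≤ ∑ i ∈ S, ∫ ω, g i ω ∂P := by
  rw [← integral_finsetSum S fun i _ => hg i]
  refine integral_mono_of_nonneg (ae_of_all _ fun ω => tsum_nonneg (hf · ω))
    (integrable_finsetSum S fun i _ => hg i) (ae_of_all _ fun ω => ?_)
  simp only [tsum_eq_sum (hfS ω)]
  exact Finset.sum_le_sum fun i _ => hfg i ω

lemma PhiEps_subset_box {d : ℕ} {D : Set (EuclideanSpace ℝ (Fin d))} {R ε : ℝ} (hε : 0 < ε)
    (hD : D ⊆ closedBall 0 R) :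
    PhiEps d D ε ⊆ ↑(Fintype.piFinset fun _ : Fin d => Finset.Icc (-⌊R / ε⌋) ⌊R / ε⌋) := by
  intro z hz
  have hzR : ε * ‖latt d z‖ ≤ R := by
    simpa [norm_smul, abs_of_pos hε] using hD hz
  rw [Finset.mem_coe, Fintype.mem_piFinset]
  intro i
  have hzi : ((|z i| : ℤ) : ℝ) ≤ R / ε := by
    rw [Int.cast_abs, le_div_iff₀ hε, mul_comm]
    exact (mul_le_mul_of_nonneg_left (PiLp.norm_apply_le (latt d z) i) hε.le).trans hzR
  exact Finset.mem_Icc.mpr (abs_le.mp (Int.le_floor.mpr hzi))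

lemma card_piFinset_Icc_neg_self (d : ℕ) {N : ℤ} (hN : 0 ≤ N) :
    ((Fintype.piFinset fun _ : Fin d => Finset.Icc (-N) N).card : ℝ) = (2 * N + 1) ^ d := by
  rw [Fintype.card_piFinset_const, Int.card_Icc, Nat.cast_pow]
  congr 1
  rw [← Int.cast_natCast, Int.toNat_of_nonneg (by omega)]
  push_cast
  ring

lemma exists_PhiEps_subset_card_le {d : ℕ} {D : Set (EuclideanSpace ℝ (Fin d))}
    (hD : IsBounded D) :
    ∃ C > 0, ∀ ε, 0 < ε → ε ≤ 1 →
      ∃ S : Finset (Fin d → ℤ), PhiEps d D ε ⊆ S ∧ ε ^ d * S.card ≤ C := by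
  obtain ⟨R, hR, hDR⟩ := hD.subset_closedBall_lt 0 0
  refine ⟨(2 * R + 1) ^ d, by positivity, fun ε hε hε1 => ⟨_, PhiEps_subset_box hε hDR, ?_⟩⟩
  have hN : (0 : ℤ) ≤ ⌊R / ε⌋ := Int.floor_nonneg.mpr (div_pos hR hε).le
  have hεN : ε * ⌊R / ε⌋ ≤ R := by
    rw [mul_comm, ← le_div_iff₀ hε]; exact Int.floor_le _
  rw [card_piFinset_Icc_neg_self d hN, ← mul_pow]
  gcongr
  nlinarith

lemma le_of_mem_Jb {d : ℕ} {D : Set (EuclideanSpace ℝ (Fin d))} {ε δ : ℝ}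
    {ρ : (Fin d → ℤ) → ℝ} {z : Fin d → ℤ} (hε : 0 < ε) (hd : (d : ℝ) - 2 ≠ 0)
    (hz : z ∈ Jb d D ε δ ρ) : ε ^ (δ - 2 / ((d : ℝ) - 2)) ≤ ρ z := by
  have hexp : δ - 2 / ((d : ℝ) - 2) = 1 + δ - d / (d - 2) := by
    field_simp
    ring
  rw [hexp, Real.rpow_sub hε, div_le_iff₀' (by positivity)]
  exact hz.2

lemma indicator_Jb_le {d : ℕ} {D : Set (EuclideanSpace ℝ (Fin d))} {ε δ β : ℝ}
    {ρ : (Fin d → ℤ) → ℝ} (hε : 0 < ε) (hd : (d : ℝ) - 2 ≠ 0) (hβ : 0 ≤ β)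
    (hρ : ∀ z, 0 ≤ ρ z) (z : Fin d → ℤ) :
    (Jb d D ε δ ρ).indicator (fun w => ρ w ^ ((d : ℝ) - 2)) z ≤
      ε ^ ((2 / ((d : ℝ) - 2) - δ) * β) * ρ z ^ ((d : ℝ) - 2 + β) := by
  by_cases hz : z ∈ Jb d D ε δ ρ
  · rw [Set.indicator_of_mem hz]
    have hεβ : ε ^ ((2 / ((d : ℝ) - 2) - δ) * β) = (ε ^ (δ - 2 / ((d : ℝ) - 2))) ^ (-β) := by
      rw [← Real.rpow_mul hε.le]
      ring_nf
    rw [hεβ]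
    exact Real.rpow_le_rpow_neg_mul_rpow_add (by positivity) (le_of_mem_Jb hε hd hz) hβ
  · rw [Set.indicator_of_notMem hz]
    have := hρ z
    positivity

theorem annealed_large_radii_bound_general
    (d : ℕ)
    (D : Set (EuclideanSpace ℝ (Fin d))) (hDbdd : IsBounded D) :
    ∃ C > 0, ∀ (δ β : ℝ), δ ∈ Set.Ioc (0 : ℝ) (2 / ((d : ℝ) - 2)) → 0 < β →
      ∀ (Ω : Type) (_ : MeasurableSpace Ω) (P : Measure Ω), IsProbabilityMeasure P →
      ∀ (ρ : (Fin d → ℤ) → Ω → ℝ),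
        (∀ z, Measurable (ρ z)) →
        (∀ z ω, 0 ≤ ρ z ω) →
        iIndepFun ρ P →
        (∀ z, IdentDistrib (ρ z) (ρ 0) P P) →
        (∫⁻ ω, ENNReal.ofReal (ρ 0 ω ^ ((d : ℝ) - 2 + β)) ∂P ≤ 1) →
        ∀ ε : ℝ, ε ∈ Set.Ioo (0 : ℝ) 1 →
          ε ^ (d : ℝ) *
              ∫ ω, ∑' z : Fin d → ℤ,
                Set.indicator (Jb d D ε δ (fun w => ρ w ω))
                  (fun w => ρ w ω ^ ((d : ℝ) - 2)) z ∂P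
            ≤ C * ε ^ ((2 / ((d : ℝ) - 2) - δ) * β) := by
  obtain ⟨C, hC, hcount⟩ := exists_PhiEps_subset_card_le hDbdd
  refine ⟨C, hC, ?_⟩
  rintro δ β ⟨hδ0, hδ2⟩ hβ Ω _ P _ ρ hmeas hρ - hid hmom ε ⟨hε0, hε1⟩
  obtain ⟨S, hPhiS, hSC⟩ := hcount ε hε0 hε1.le
  have hd2 : (d : ℝ) - 2 ≠ 0 := ((div_pos_iff_of_pos_left two_pos).mp (hδ0.trans_le hδ2)).ne'
  set p := (d : ℝ) - 2 + β
  set c := (2 / ((d : ℝ) - 2) - δ) * β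
  have hmoment : ∀ z, Integrable (fun ω => ρ z ω ^ p) P ∧ ∫ ω, ρ z ω ^ p ∂P ≤ 1 := fun z =>
    integrable_and_integral_le_one_of_lintegral_ofReal_le_one
      (ae_of_all _ fun ω => by have := hρ z ω; positivity)
      ((hmeas z).pow_const p).aestronglyMeasurable
      (((hid z).comp (measurable_id.pow_const p).ennreal_ofReal).lintegral_eq ▸ hmom)
  have hsum : ∫ ω, ∑' z, (Jb d D ε δ fun w => ρ w ω).indicator (fun w => ρ w ω ^ ((d : ℝ) - 2)) z ∂P
      ≤ ∑ z ∈ S, ∫ ω, ε ^ c * ρ z ω ^ p ∂P :=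
    integral_tsum_le_sum_integral S
      (fun z ω => Set.indicator_nonneg (fun w _ => by have := hρ w ω; positivity) z)
      (fun ω z hz => Set.indicator_of_notMem (fun hJ => hz (hPhiS hJ.1)) _)
      (fun z ω => indicator_Jb_le hε0 hd2 hβ.le (hρ · ω) z)
      (fun z => (hmoment z).1.const_mul _)
  calc _ ≤ ε ^ (d : ℝ) * ∑ z ∈ S, ∫ ω, ε ^ c * ρ z ω ^ p ∂P := by gcongr
    _ ≤ ε ^ (d : ℝ) * ∑ _z ∈ S, ε ^ c := by
        gcongr with z
        rw [integral_const_mul]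
        exact mul_le_of_le_one_right (by positivity) (hmoment z).2
    _ = (ε ^ d * S.card) * ε ^ c := by
        rw [Finset.sum_const, nsmul_eq_mul, Real.rpow_natCast]
        ring
    _ ≤ C * ε ^ c := by gcongr

/-- `ε^d E[ Σ_{z ∈ J^ε_b} ρ_z^{d−2} ] ≤ C ε^{(2/(d−2) − δ)β}` with `C = C(d, D)`. -/
theorem annealed_large_radii_bound
    (d : ℕ) (hd : 3 ≤ d)
    (D : Set (EuclideanSpace ℝ (Fin d))) (hDopen : IsOpen D) (hDbdd : IsBounded D) :
    ∃ C > 0, ∀ (δ β : ℝ), δ ∈ Set.Ioc (0 : ℝ) (2 / ((d : ℝ) - 2)) → 0 < β →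
      ∀ (Ω : Type) (_ : MeasurableSpace Ω) (P : Measure Ω), IsProbabilityMeasure P →
      ∀ (ρ : (Fin d → ℤ) → Ω → ℝ),
        (∀ z, Measurable (ρ z)) →
        (∀ z ω, 0 ≤ ρ z ω) →
        iIndepFun ρ P →
        (∀ z, IdentDistrib (ρ z) (ρ 0) P P) →
        (∫⁻ ω, ENNReal.ofReal (ρ 0 ω ^ ((d : ℝ) - 2 + β)) ∂P ≤ 1) →
        ∀ ε : ℝ, ε ∈ Set.Ioo (0 : ℝ) 1 →
          ε ^ (d : ℝ) *
              ∫ ω, ∑' z : Fin d → ℤ,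
                Set.indicator (Jb d D ε δ (fun w => ρ w ω))
                  (fun w => ρ w ω ^ ((d : ℝ) - 2)) z ∂P
            ≤ C * ε ^ ((2 / ((d : ℝ) - 2) - δ) * β) :=
  annealed_large_radii_bound_general d D hDbdd
end
end

section
/- Fix an integer d ≥ 3, a bounded domain D ⊂ ℝ^d, and δ ∈ (0, 2/(d−2)]. There exists a constant C = C(d, D) such that for every ε ∈ (0,1) with ε^δ < 1/4, one has E[ ε^d Σ_{z ∈ Ĩ^ε_b} ρ_z^{d−2} ] ≤ C ε^{(2/(d−2) − δ)β}. -/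
open Metric Set Bornology MeasureTheory ProbabilityTheory

noncomputable section

/-- `H̃^ε_b := ∪_{z∈J^ε_b} B(εz, 2 min(ε^{d/(d−2)} ρ_z, 1))`. -/
def Htilde (d : ℕ) (D : Set (EuclideanSpace ℝ (Fin d))) (ε δ : ℝ) (ρ : (Fin d → ℤ) → ℝ) :
    Set (EuclideanSpace ℝ (Fin d)) :=
  ⋃ z ∈ Jb d D ε δ ρ,
    ball (ε • latt d z) (2 * min (ε ^ ((d : ℝ) / ((d : ℝ) - 2)) * ρ z) 1)

/-- `Ĩ^ε_b := {z ∈ Φ^ε(D) \ J^ε_b : H̃^ε_b ∩ B(εz, ε/4) ≠ ∅}`. -/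
def Itilde (d : ℕ) (D : Set (EuclideanSpace ℝ (Fin d))) (ε δ : ℝ) (ρ : (Fin d → ℤ) → ℝ) :
    Set (Fin d → ℤ) :=
  {z ∈ PhiEps d D ε \ Jb d D ε δ ρ |
    (Htilde d D ε δ ρ ∩ ball (ε • latt d z) (ε / 4)).Nonempty}

/-! Write `γ = 2/(d-2) - δ`. Every `z ∈ Ĩ^ε_b` has a neighbour `z' ∈ J^ε_b`, `z' ≠ z`, with
`ρ_{z'} ≥ ε^{-γ}` whose hole comes within `ε/4` of `εz`, so the sum is dominated by a sum over
ordered pairs `z ≠ z'` of the `O(ε^{-d})` sites of `Φ^ε(D)`. Each pair term factorises by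
independence, and `E ρ_z^{d-2} ≤ 2`. For fixed `z'` with mark `t ≥ ε^{-γ}`, the number of sites
reached is `O(min(ε^{2/(d-2)} t, ε⁻¹)^d + 1)`; capping by `ε⁻¹` when `β ≤ 2` and using
`t ≥ ε^{-γ}` when `β ≥ 2` bounds it by `6^d ε^{γβ} t^{d-2+β}`, whose expectation is at most
`6^d ε^{γβ}`. -/

open scoped ENNReal Finset

theorem Int.card_Icc_ceil_floor_le {a b : ℝ} (hab : a ≤ b) :
    (#(Finset.Icc ⌈a⌉ ⌊b⌋) : ℝ) ≤ b - a + 1 := by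
  have hceil : ⌈a⌉ ≤ ⌊b⌋ + 1 := Int.ceil_le.2 (by push_cast; linarith [Int.lt_floor_add_one b])
  rw [Int.card_Icc, ← Int.cast_natCast, Int.toNat_of_nonneg (by omega)]
  push_cast
  linarith [Int.le_ceil a, Int.floor_le b]

def latticeBox (d : ℕ) (ε : ℝ) (x : EuclideanSpace ℝ (Fin d)) (r : ℝ) : Finset (Fin d → ℤ) :=
  Finset.Icc (fun i => ⌈(x i - r) / ε⌉) (fun i => ⌊(x i + r) / ε⌋)

section latticeBox

variable {d : ℕ} {ε r : ℝ}

theorem mem_latticeBox_of_dist_le (hε : 0 < ε) {x : EuclideanSpace ℝ (Fin d)} {z : Fin d → ℤ}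
    (h : dist (ε • latt d z) x ≤ r) : z ∈ latticeBox d ε x r := by
  have hcoord (i : Fin d) : |ε * z i - x i| ≤ r :=
    (PiLp.dist_apply_le _ _ i).trans h
  simp only [latticeBox, Finset.mem_Icc]
  refine ⟨fun i => Int.ceil_le.2 ?_, fun i => Int.le_floor.2 ?_⟩
  · rw [div_le_iff₀ hε]; linarith [(abs_le.1 (hcoord i)).1]
  · rw [le_div_iff₀ hε]; linarith [(abs_le.1 (hcoord i)).2]

theorem card_latticeBox_le (hε : 0 < ε) (hr : 0 ≤ r) (x : EuclideanSpace ℝ (Fin d)) :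
    (#(latticeBox d ε x r) : ℝ) ≤ (2 * r / ε + 1) ^ d := by
  rw [latticeBox, Pi.card_Icc, Nat.cast_prod]
  calc ∏ i, (#(Finset.Icc ⌈(x i - r) / ε⌉ ⌊(x i + r) / ε⌋) : ℝ)
      ≤ ∏ _i : Fin d, (2 * r / ε + 1) := by
        refine Finset.prod_le_prod (fun _ _ => by positivity) fun i _ => ?_
        exact (Int.card_Icc_ceil_floor_le (by gcongr; linarith)).trans_eq (by ring)
    _ = (2 * r / ε + 1) ^ d := by simp

theorem rpow_natCast_mul_card_latticeBox_le (hε0 : 0 < ε) (hε1 : ε ≤ 1) (hr : 0 ≤ r)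
    (x : EuclideanSpace ℝ (Fin d)) :
    ε ^ (d : ℝ) * #(latticeBox d ε x r) ≤ (2 * r + 1) ^ d :=
  calc ε ^ (d : ℝ) * #(latticeBox d ε x r) ≤ ε ^ d * (2 * r / ε + 1) ^ d := by
        rw [Real.rpow_natCast]; gcongr; exact card_latticeBox_le hε0 hr x
    _ = (2 * r + ε) ^ d := by rw [← mul_pow]; congr 1; field_simp
    _ ≤ (2 * r + 1) ^ d := by gcongr

end latticeBox

theorem cast_sub_two_pos {d : ℕ} (hd : 3 ≤ d) : (0 : ℝ) < d - 2 := by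
  have : (3 : ℝ) ≤ d := by exact_mod_cast hd
  linarith

section exponents

variable {ε γ β t : ℝ}

theorem one_le_rpow_mul_rpow (hε0 : 0 < ε) (hε1 : ε ≤ 1) (hγ : 0 ≤ γ) {p : ℝ} (hp : 0 ≤ p)
    (hβp : β ≤ p) (ht : ε ^ (-γ) ≤ t) : 1 ≤ ε ^ (γ * β) * t ^ p :=
  calc 1 ≤ ε ^ (γ * (β - p)) :=
        Real.one_le_rpow_of_pos_of_le_one_of_nonpos hε0 hε1 (by nlinarith)
    _ = ε ^ (γ * β) * (ε ^ (-γ)) ^ p := by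
        rw [← Real.rpow_mul hε0.le, ← Real.rpow_add hε0]; ring_nf
    _ ≤ ε ^ (γ * β) * t ^ p := by gcongr

theorem pow_le_rpow_mul_rpow {d : ℕ} (hd : 3 ≤ d) (hε0 : 0 < ε) (hε1 : ε ≤ 1)
    (hγ : γ ≤ 2 / ((d : ℝ) - 2)) (hβ : 0 ≤ β) (ht : ε ^ (-γ) ≤ t) {u : ℝ} (hu0 : 0 ≤ u)
    (hut : u ≤ ε ^ (2 / ((d : ℝ) - 2)) * t) (huε : u ≤ ε⁻¹) :
    u ^ d ≤ ε ^ (γ * β) * t ^ ((d : ℝ) - 2 + β) := by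
  set c := 2 / ((d : ℝ) - 2)
  set p := (d : ℝ) - 2 + β
  have hd2 := cast_sub_two_pos hd
  have hcp : c * p = 2 + c * β := by simp only [c, p]; field_simp
  have ht0 : 0 < t := (Real.rpow_pos_of_pos hε0 _).trans_le ht
  have hpd : p + (2 - β) = d := by ring
  rw [← Real.rpow_natCast]
  rcases le_total β 2 with hβ2 | hβ2
  · calc u ^ (d : ℝ) = u ^ p * u ^ (2 - β) := by
          rw [← Real.rpow_add' hu0 (by rw [hpd]; positivity), hpd]
      _ ≤ (ε ^ c * t) ^ p * ε⁻¹ ^ (2 - β) := by gcongr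
      _ = ε ^ (c * p + (β - 2)) * t ^ p := by
          rw [Real.mul_rpow (by positivity) ht0.le, Real.inv_rpow hε0.le, ← Real.rpow_neg hε0.le,
            ← Real.rpow_mul hε0.le, Real.rpow_add hε0]
          ring_nf
      _ ≤ ε ^ (γ * β) * t ^ p := by
          gcongr ?_ * _
          exact Real.rpow_le_rpow_of_exponent_ge hε0 hε1 (by nlinarith)
  · calc u ^ (d : ℝ) ≤ (ε ^ c * t) ^ (d : ℝ) := by gcongr
      _ = ε ^ (c * d) * (t ^ p * t ^ (2 - β)) := by
          rw [Real.mul_rpow (by positivity) ht0.le, ← Real.rpow_mul hε0.le,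
            ← Real.rpow_add ht0, hpd]
      _ ≤ ε ^ (c * d) * (t ^ p * (ε ^ (-γ)) ^ (2 - β)) := by
          gcongr _ * (_ * ?_)
          exact Real.rpow_le_rpow_of_nonpos (by positivity) ht (by linarith)
      _ = ε ^ (c * d + γ * (β - 2)) * t ^ p := by
          rw [← Real.rpow_mul hε0.le, Real.rpow_add hε0]; ring_nf
      _ ≤ ε ^ (γ * β) * t ^ p := by
          have hcd : 2 * c ≤ c * d := by nlinarith [show 0 ≤ c by positivity]
          gcongr ?_ * _
          exact Real.rpow_le_rpow_of_exponent_ge hε0 hε1 (by nlinarith)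

theorem reach_radius_pow_le {d : ℕ} (hd : 3 ≤ d) (hε0 : 0 < ε) (hε1 : ε ≤ 1)
    (hγ0 : 0 ≤ γ) (hγ : γ ≤ 2 / ((d : ℝ) - 2)) (hβ : 0 ≤ β) (ht : ε ^ (-γ) ≤ t) :
    (2 * (2 * min (ε ^ ((d : ℝ) / ((d : ℝ) - 2)) * t) 1 + ε / 4) / ε + 1) ^ d
      ≤ 6 ^ d * (ε ^ (γ * β) * t ^ ((d : ℝ) - 2 + β)) := by
  have hd2 := cast_sub_two_pos hd
  have ht0 : 0 < t := (Real.rpow_pos_of_pos hε0 _).trans_le ht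
  set u := min (ε ^ ((d : ℝ) / ((d : ℝ) - 2)) * t) 1 / ε
  have hu0 : 0 ≤ u := by positivity
  have hut : u ≤ ε ^ (2 / ((d : ℝ) - 2)) * t := by
    have hexp : (d : ℝ) / (d - 2) = 1 + 2 / (d - 2) := by field_simp; ring
    rw [div_le_iff₀ hε0]
    calc min (ε ^ ((d : ℝ) / ((d : ℝ) - 2)) * t) 1 ≤ ε ^ ((d : ℝ) / ((d : ℝ) - 2)) * t :=
          min_le_left _ _
      _ = ε ^ (2 / ((d : ℝ) - 2)) * t * ε := by
          rw [hexp, Real.rpow_add hε0, Real.rpow_one]; ring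
  have huε : u ≤ ε⁻¹ := by
    rw [div_le_iff₀ hε0, inv_mul_cancel₀ hε0.ne']
    exact min_le_right _ _
  have hu : 2 * (2 * min (ε ^ ((d : ℝ) / ((d : ℝ) - 2)) * t) 1 + ε / 4) / ε + 1
      = 4 * u + 3 / 2 := by
    simp only [u]; field_simp; ring
  rw [hu]
  rcases le_total u 1 with hu1 | hu1
  · calc (4 * u + 3 / 2) ^ d ≤ 6 ^ d := pow_le_pow_left₀ (by positivity) (by linarith) d
      _ ≤ 6 ^ d * (ε ^ (γ * β) * t ^ ((d : ℝ) - 2 + β)) :=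
        le_mul_of_one_le_right (by positivity)
          (one_le_rpow_mul_rpow hε0 hε1 hγ0 (by linarith) (by linarith) ht)
  · calc (4 * u + 3 / 2) ^ d ≤ (6 * u) ^ d := pow_le_pow_left₀ (by positivity) (by linarith) d
      _ = 6 ^ d * u ^ d := mul_pow _ _ _
      _ ≤ 6 ^ d * (ε ^ (γ * β) * t ^ ((d : ℝ) - 2 + β)) := by
        gcongr
        exact pow_le_rpow_mul_rpow hd hε0 hε1 hγ hβ ht hu0 hut huε

end exponents

/-- The marks `t` for which a site `z' ∈ J^ε_b` with `ρ_{z'} = t` and `|εz - εz'| = c` has its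
hole `B(εz', 2 min(ε^{d/(d-2)} t, 1))` meeting `B(εz, ε/4)`. -/
def reachMarks (d : ℕ) (ε δ c : ℝ) : Set ℝ :=
  {t | ε ^ (-(2 / ((d : ℝ) - 2) - δ)) ≤ t ∧
    c < 2 * min (ε ^ ((d : ℝ) / ((d : ℝ) - 2)) * t) 1 + ε / 4}

theorem measurableSet_reachMarks (d : ℕ) (ε δ c : ℝ) : MeasurableSet (reachMarks d ε δ c) :=
  (measurableSet_le measurable_const measurable_id).inter
    (measurableSet_lt measurable_const
      ((((measurable_id.const_mul _).min measurable_const).const_mul 2).add_const (ε / 4)))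

theorem sum_indicator_reachMarks_le {d : ℕ} (hd : 3 ≤ d) {ε δ β t : ℝ} (hε0 : 0 < ε)
    (hε1 : ε ≤ 1) (hδ0 : 0 ≤ δ) (hδ : δ ≤ 2 / ((d : ℝ) - 2)) (hβ : 0 ≤ β)
    (S : Finset (Fin d → ℤ)) (y : EuclideanSpace ℝ (Fin d)) :
    ∑ z ∈ S, (reachMarks d ε δ (dist (ε • latt d z) y)).indicator 1 t
      ≤ ENNReal.ofReal (6 ^ d * ε ^ ((2 / ((d : ℝ) - 2) - δ) * β) * t ^ ((d : ℝ) - 2 + β)) := by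
  classical
  by_cases ht : ε ^ (-(2 / ((d : ℝ) - 2) - δ)) ≤ t
  · set r := 2 * min (ε ^ ((d : ℝ) / ((d : ℝ) - 2)) * t) 1 + ε / 4
    have hr : 0 ≤ r := by
      have : 0 ≤ t := (Real.rpow_pos_of_pos hε0 _).le.trans ht
      positivity
    have hfilter : S.filter (fun z => t ∈ reachMarks d ε δ (dist (ε • latt d z) y))
        ⊆ latticeBox d ε y r :=
      fun z hz => mem_latticeBox_of_dist_le hε0 (Finset.mem_filter.1 hz).2.2.le
    calc ∑ z ∈ S, (reachMarks d ε δ (dist (ε • latt d z) y)).indicator 1 t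
        = (#(S.filter fun z => t ∈ reachMarks d ε δ (dist (ε • latt d z) y)) : ℝ≥0∞) := by
          simp only [Set.indicator_apply, Pi.one_apply, Finset.sum_boole]
      _ ≤ ENNReal.ofReal (#(latticeBox d ε y r) : ℝ) := by
          rw [ENNReal.ofReal_natCast]; exact_mod_cast Finset.card_le_card hfilter
      _ ≤ ENNReal.ofReal ((2 * r / ε + 1) ^ d) :=
          ENNReal.ofReal_le_ofReal (card_latticeBox_le hε0 hr y)
      _ ≤ _ := ENNReal.ofReal_le_ofReal
          ((reach_radius_pow_le hd hε0 hε1 (by linarith) (by linarith) hβ ht).trans_eq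
            (mul_assoc _ _ _).symm)
  · rw [Finset.sum_eq_zero fun z _ => Set.indicator_of_notMem (fun h => ht h.1) _]
    exact zero_le

section sites

variable {d : ℕ} {D : Set (EuclideanSpace ℝ (Fin d))} {ε δ : ℝ} {ρ : (Fin d → ℤ) → ℝ}

theorem PhiEps_subset_latticeBox (hε0 : 0 < ε) {R : ℝ} (hDR : D ⊆ ball 0 R) :
    PhiEps d D ε ⊆ latticeBox d ε 0 R :=
  fun _ hz => mem_latticeBox_of_dist_le hε0 (mem_ball.1 (hDR hz)).le

theorem rpow_neg_le_of_mem_Jb (hd : d ≠ 2) (hε0 : 0 < ε) {z : Fin d → ℤ}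
    (hz : z ∈ Jb d D ε δ ρ) : ε ^ (-(2 / ((d : ℝ) - 2) - δ)) ≤ ρ z := by
  have hd2 : (d : ℝ) - 2 ≠ 0 := sub_ne_zero.2 (by exact_mod_cast hd)
  have hsplit : ε ^ (1 + δ) = ε ^ ((d : ℝ) / ((d : ℝ) - 2)) * ε ^ (-(2 / ((d : ℝ) - 2) - δ)) := by
    rw [← Real.rpow_add hε0]; congr 1; field_simp; ring
  exact le_of_mul_le_mul_left (hsplit ▸ hz.2) (by positivity)

theorem exists_mem_reachMarks_of_mem_Itilde (hd : d ≠ 2) (hε0 : 0 < ε) {z : Fin d → ℤ}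
    (hz : z ∈ Itilde d D ε δ ρ) :
    ∃ z' ∈ PhiEps d D ε, z' ≠ z ∧
      ρ z' ∈ reachMarks d ε δ (dist (ε • latt d z) (ε • latt d z')) := by
  obtain ⟨⟨-, hzJ⟩, x, hxH, hxz⟩ := hz
  obtain ⟨z', hz'J, hxz'⟩ := mem_iUnion₂.1 hxH
  refine ⟨z', hz'J.1, fun h => hzJ (h ▸ hz'J), rpow_neg_le_of_mem_Jb hd hε0 hz'J, ?_⟩
  calc dist (ε • latt d z) (ε • latt d z')
      ≤ dist x (ε • latt d z) + dist x (ε • latt d z') := dist_triangle_left _ _ _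
    _ < ε / 4 + 2 * min (ε ^ ((d : ℝ) / ((d : ℝ) - 2)) * ρ z') 1 := add_lt_add hxz hxz'
    _ = _ := add_comm _ _

theorem ofReal_tsum_indicator_Itilde_le (hd : d ≠ 2) (hε0 : 0 < ε) (hρ : ∀ z, 0 ≤ ρ z) (q : ℝ)
    {T : Finset (Fin d → ℤ)} (hT : PhiEps d D ε ⊆ T) :
    ENNReal.ofReal (∑' z, (Itilde d D ε δ ρ).indicator (fun w => ρ w ^ q) z)
      ≤ ∑ z' ∈ T, ∑ z ∈ T.erase z',
          (reachMarks d ε δ (dist (ε • latt d z) (ε • latt d z'))).indicator 1 (ρ z')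
            * ENNReal.ofReal (ρ z ^ q) := by
  have hsupp : ∀ z ∉ T, (Itilde d D ε δ ρ).indicator (fun w => ρ w ^ q) z = 0 :=
    fun z hz => Set.indicator_of_notMem (fun hI => hz (hT hI.1.1)) _
  rw [tsum_eq_sum hsupp, ENNReal.ofReal_sum_of_nonneg
      fun z _ => Set.indicator_nonneg (fun w _ => Real.rpow_nonneg (hρ w) q) z,
    Finset.sum_comm' (t' := T) (s' := fun z => T.erase z)
      fun z' z => by simp only [Finset.mem_erase]; grind]
  refine Finset.sum_le_sum fun z _ => ?_
  by_cases hzI : z ∈ Itilde d D ε δ ρ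
  · obtain ⟨z', hz'Φ, hne, hreach⟩ := exists_mem_reachMarks_of_mem_Itilde hd hε0 hzI
    calc ENNReal.ofReal ((Itilde d D ε δ ρ).indicator (fun w => ρ w ^ q) z)
        = (reachMarks d ε δ (dist (ε • latt d z) (ε • latt d z'))).indicator 1 (ρ z')
            * ENNReal.ofReal (ρ z ^ q) := by
          rw [Set.indicator_of_mem hzI, Set.indicator_of_mem hreach, Pi.one_apply, one_mul]
      _ ≤ _ := Finset.single_le_sum
          (f := fun w => (reachMarks d ε δ (dist (ε • latt d z) (ε • latt d w))).indicator 1 (ρ w)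
            * ENNReal.ofReal (ρ z ^ q))
          (fun _ _ => zero_le) (Finset.mem_erase.2 ⟨hne, hT hz'Φ⟩)
  · simp [Set.indicator_of_notMem hzI]

end sites

theorem Real.rpow_le_one_add_rpow {x q p : ℝ} (hx : 0 ≤ x) (hq : 0 ≤ q) (hqp : q ≤ p) :
    x ^ q ≤ 1 + x ^ p := by
  rcases le_total x 1 with h | h
  · exact (Real.rpow_le_one hx h hq).trans (le_add_of_nonneg_right (by positivity))
  · exact (Real.rpow_le_rpow_of_exponent_le h hqp).trans (le_add_of_nonneg_left zero_le_one)

section probability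

variable {Ω : Type*} [MeasurableSpace Ω] {P : Measure Ω}

theorem lintegral_ofReal_rpow_le_one_add [IsProbabilityMeasure P] {X : Ω → ℝ}
    (hX : ∀ ω, 0 ≤ X ω) {q p : ℝ} (hq : 0 ≤ q) (hqp : q ≤ p) {c : ℝ≥0∞}
    (h : ∫⁻ ω, ENNReal.ofReal (X ω ^ p) ∂P ≤ c) :
    ∫⁻ ω, ENNReal.ofReal (X ω ^ q) ∂P ≤ 1 + c :=
  calc ∫⁻ ω, ENNReal.ofReal (X ω ^ q) ∂P ≤ ∫⁻ ω, 1 + ENNReal.ofReal (X ω ^ p) ∂P :=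
        lintegral_mono fun ω => by
          rw [← ENNReal.ofReal_one, ← ENNReal.ofReal_add zero_le_one (Real.rpow_nonneg (hX ω) p)]
          exact ENNReal.ofReal_le_ofReal (Real.rpow_le_one_add_rpow (hX ω) hq hqp)
    _ = 1 + ∫⁻ ω, ENNReal.ofReal (X ω ^ p) ∂P := by
        rw [lintegral_add_left measurable_const, lintegral_one, measure_univ]
    _ ≤ 1 + c := by gcongr

theorem lintegral_sum_sum_erase_mul_le {ι α : Type*} [DecidableEq ι] [MeasurableSpace α]
    {X : ι → Ω → α} (hX : ∀ i, Measurable (X i)) (hindep : iIndepFun X P) (T : Finset ι)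
    {f : ι → ι → α → ℝ≥0∞} {g : α → ℝ≥0∞} (hf : ∀ i j, Measurable (f i j)) (hg : Measurable g)
    {A B : ℝ≥0∞} (hA : ∀ i, ∫⁻ ω, g (X i ω) ∂P ≤ A)
    (hB : ∀ j, ∫⁻ ω, ∑ i ∈ T.erase j, f i j (X j ω) ∂P ≤ B) :
    ∫⁻ ω, ∑ j ∈ T, ∑ i ∈ T.erase j, f i j (X j ω) * g (X i ω) ∂P ≤ #T * (B * A) := by
  have hfX (i j : ι) : Measurable fun ω => f i j (X j ω) := (hf i j).comp (hX j)
  have hgX (i : ι) : Measurable fun ω => g (X i ω) := hg.comp (hX i)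
  have hfgX (i j : ι) : Measurable fun ω => f i j (X j ω) * g (X i ω) := (hfX i j).mul (hgX i)
  have hpair (j : ι) : ∀ i ∈ T.erase j,
      ∫⁻ ω, f i j (X j ω) * g (X i ω) ∂P ≤ (∫⁻ ω, f i j (X j ω) ∂P) * A := by
    intro i hi
    rw [lintegral_mul_eq_lintegral_mul_lintegral_of_indepFun'' (hfX i j).aemeasurable
      (hgX i).aemeasurable
      ((hindep.indepFun (Finset.ne_of_mem_erase hi).symm).comp (hf i j) hg)]
    gcongr
    exact hA i
  have hrow (j : ι) : ∑ i ∈ T.erase j, ∫⁻ ω, f i j (X j ω) * g (X i ω) ∂P ≤ B * A :=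
    calc ∑ i ∈ T.erase j, ∫⁻ ω, f i j (X j ω) * g (X i ω) ∂P
        ≤ ∑ i ∈ T.erase j, (∫⁻ ω, f i j (X j ω) ∂P) * A := Finset.sum_le_sum (hpair j)
      _ = (∫⁻ ω, ∑ i ∈ T.erase j, f i j (X j ω) ∂P) * A := by
          rw [← Finset.sum_mul, lintegral_finsetSum _ fun i _ => hfX i j]
      _ ≤ B * A := by gcongr; exact hB j
  calc ∫⁻ ω, ∑ j ∈ T, ∑ i ∈ T.erase j, f i j (X j ω) * g (X i ω) ∂P
      = ∑ j ∈ T, ∑ i ∈ T.erase j, ∫⁻ ω, f i j (X j ω) * g (X i ω) ∂P := by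
        rw [lintegral_finsetSum _ fun j _ => Finset.measurable_sum _ fun i _ => hfgX i j]
        exact Finset.sum_congr rfl fun j _ => lintegral_finsetSum _ fun i _ => hfgX i j
    _ ≤ ∑ _j ∈ T, B * A := Finset.sum_le_sum fun j _ => hrow j
    _ = #T * (B * A) := by rw [Finset.sum_const, nsmul_eq_mul]

theorem integral_le_of_lintegral_ofReal_le {f : Ω → ℝ} (hf : 0 ≤ᵐ[P] f) {b : ℝ} (hb : 0 ≤ b)
    (h : ∫⁻ ω, ENNReal.ofReal (f ω) ∂P ≤ ENNReal.ofReal b) : ∫ ω, f ω ∂P ≤ b := by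
  by_cases hfi : Integrable f P
  · rw [integral_eq_lintegral_of_nonneg_ae hf hfi.1]
    exact ENNReal.toReal_le_of_le_ofReal hb h
  · rw [integral_undef hfi]
    exact hb

end probability

section annealed

variable {Ω : Type*} [MeasurableSpace Ω] {P : Measure Ω} {d : ℕ} {ε δ β : ℝ}

theorem lintegral_sum_indicator_reachMarks_le (hd : 3 ≤ d) (hε0 : 0 < ε) (hε1 : ε ≤ 1)
    (hδ0 : 0 ≤ δ) (hδ : δ ≤ 2 / ((d : ℝ) - 2)) (hβ : 0 ≤ β) (S : Finset (Fin d → ℤ))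
    (y : EuclideanSpace ℝ (Fin d)) {X : Ω → ℝ}
    (hX : ∫⁻ ω, ENNReal.ofReal (X ω ^ ((d : ℝ) - 2 + β)) ∂P ≤ 1) :
    ∫⁻ ω, ∑ z ∈ S, (reachMarks d ε δ (dist (ε • latt d z) y)).indicator 1 (X ω) ∂P
      ≤ ENNReal.ofReal (6 ^ d * ε ^ ((2 / ((d : ℝ) - 2) - δ) * β)) :=
  calc _ ≤ ∫⁻ ω, ENNReal.ofReal (6 ^ d * ε ^ ((2 / ((d : ℝ) - 2) - δ) * β))
          * ENNReal.ofReal (X ω ^ ((d : ℝ) - 2 + β)) ∂P :=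
        lintegral_mono fun ω => (sum_indicator_reachMarks_le hd hε0 hε1 hδ0 hδ hβ S y).trans_eq
          (ENNReal.ofReal_mul (by positivity))
    _ ≤ ENNReal.ofReal (6 ^ d * ε ^ ((2 / ((d : ℝ) - 2) - δ) * β)) * 1 := by
        rw [lintegral_const_mul' _ _ ENNReal.ofReal_ne_top]; gcongr
    _ = _ := mul_one _

theorem lintegral_ofReal_tsum_indicator_Itilde_le [IsProbabilityMeasure P] (hd : 3 ≤ d)
    (hε0 : 0 < ε) (hε1 : ε ≤ 1) (hδ0 : 0 ≤ δ) (hδ : δ ≤ 2 / ((d : ℝ) - 2)) (hβ : 0 ≤ β)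
    {D : Set (EuclideanSpace ℝ (Fin d))} {ρ : (Fin d → ℤ) → Ω → ℝ} (hρm : ∀ z, Measurable (ρ z))
    (hρ0 : ∀ z ω, 0 ≤ ρ z ω) (hindep : iIndepFun ρ P) (hident : ∀ z, IdentDistrib (ρ z) (ρ 0) P P)
    (hmom : ∫⁻ ω, ENNReal.ofReal (ρ 0 ω ^ ((d : ℝ) - 2 + β)) ∂P ≤ 1)
    {T : Finset (Fin d → ℤ)} (hT : PhiEps d D ε ⊆ T) :
    ∫⁻ ω, ENNReal.ofReal (∑' z, (Itilde d D ε δ fun w => ρ w ω).indicator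
        (fun w => ρ w ω ^ ((d : ℝ) - 2)) z) ∂P
      ≤ ENNReal.ofReal (#T * (6 ^ d * ε ^ ((2 / ((d : ℝ) - 2) - δ) * β) * 2)) := by
  have hmeas_rpow (q : ℝ) : Measurable fun t : ℝ => ENNReal.ofReal (t ^ q) := by fun_prop
  have hmom' (z : Fin d → ℤ) : ∫⁻ ω, ENNReal.ofReal (ρ z ω ^ ((d : ℝ) - 2 + β)) ∂P ≤ 1 :=
    ((hident z).comp (hmeas_rpow _)).lintegral_eq ▸ hmom
  have hA (z : Fin d → ℤ) : ∫⁻ ω, ENNReal.ofReal (ρ z ω ^ ((d : ℝ) - 2)) ∂P ≤ 2 :=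
    (lintegral_ofReal_rpow_le_one_add (hρ0 z) (cast_sub_two_pos hd).le (by linarith)
      (hmom' z)).trans_eq one_add_one_eq_two
  calc _ ≤ _ := lintegral_mono fun ω =>
        ofReal_tsum_indicator_Itilde_le (by omega) hε0 (fun z => hρ0 z ω) _ hT
    _ ≤ #T * (ENNReal.ofReal (6 ^ d * ε ^ ((2 / ((d : ℝ) - 2) - δ) * β)) * 2) :=
        lintegral_sum_sum_erase_mul_le hρm hindep T
          (fun _ _ => measurable_const.indicator (measurableSet_reachMarks _ _ _ _))
          (hmeas_rpow _) hA
          fun z' => lintegral_sum_indicator_reachMarks_le hd hε0 hε1 hδ0 hδ hβ _ _ (hmom' z')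
    _ = _ := by
        rw [ENNReal.ofReal_mul (Nat.cast_nonneg _), ENNReal.ofReal_mul' zero_le_two,
          ENNReal.ofReal_natCast, ENNReal.ofReal_ofNat]

end annealed

theorem annealed_close_neighbours_bound_general
    (d : ℕ) (hd : 3 ≤ d)
    (D : Set (EuclideanSpace ℝ (Fin d))) (hDbdd : IsBounded D) :
    ∃ C > 0, ∀ (δ β : ℝ), δ ∈ Set.Ioc (0 : ℝ) (2 / ((d : ℝ) - 2)) → 0 < β →
      ∀ (Ω : Type) (_ : MeasurableSpace Ω) (P : Measure Ω), IsProbabilityMeasure P →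
      ∀ (ρ : (Fin d → ℤ) → Ω → ℝ),
        (∀ z, Measurable (ρ z)) →
        (∀ z ω, 0 ≤ ρ z ω) →
        iIndepFun ρ P →
        (∀ z, IdentDistrib (ρ z) (ρ 0) P P) →
        (∫⁻ ω, ENNReal.ofReal (ρ 0 ω ^ ((d : ℝ) - 2 + β)) ∂P ≤ 1) →
        ∀ ε : ℝ, ε ∈ Set.Ioo (0 : ℝ) 1 → ε ^ δ < 1 / 4 →
          (∫ ω, ε ^ (d : ℝ) *
              ∑' z : Fin d → ℤ,
                Set.indicator (Itilde d D ε δ (fun w => ρ w ω))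
                  (fun w => ρ w ω ^ ((d : ℝ) - 2)) z ∂P)
            ≤ C * ε ^ ((2 / ((d : ℝ) - 2) - δ) * β) := by
  obtain ⟨R, hR, hDR⟩ := hDbdd.subset_ball_lt 0 0
  refine ⟨2 * (6 * (2 * R + 1)) ^ d, by positivity, ?_⟩
  rintro δ β ⟨hδ0, hδ⟩ hβ Ω _ P _ ρ hρm hρ0 hindep hident hmom ε ⟨hε0, hε1⟩ -
  set T := latticeBox d ε 0 R
  have hexpect : ∫ ω, ∑' z : Fin d → ℤ, (Itilde d D ε δ fun w => ρ w ω).indicator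
      (fun w => ρ w ω ^ ((d : ℝ) - 2)) z ∂P
        ≤ #T * (6 ^ d * ε ^ ((2 / ((d : ℝ) - 2) - δ) * β) * 2) :=
    integral_le_of_lintegral_ofReal_le (Filter.Eventually.of_forall fun ω =>
        tsum_nonneg fun z => Set.indicator_nonneg (fun w _ => Real.rpow_nonneg (hρ0 w ω) _) z)
      (by positivity)
      (lintegral_ofReal_tsum_indicator_Itilde_le hd hε0 hε1.le hδ0.le hδ hβ.le hρm hρ0 hindep
        hident hmom (PhiEps_subset_latticeBox hε0 hDR))
  rw [integral_const_mul]
  calc ε ^ (d : ℝ) * _ ≤ ε ^ (d : ℝ) * (#T * (6 ^ d * ε ^ ((2 / ((d : ℝ) - 2) - δ) * β) * 2)) := by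
        gcongr
    _ ≤ (2 * R + 1) ^ d * (6 ^ d * ε ^ ((2 / ((d : ℝ) - 2) - δ) * β) * 2) := by
        rw [← mul_assoc]
        gcongr
        exact rpow_natCast_mul_card_latticeBox_le hε0 hε1.le hR.le 0
    _ = _ := by rw [mul_pow]; ring

/-- `E[ ε^d Σ_{z ∈ Ĩ^ε_b} ρ_z^{d−2} ] ≤ C ε^{(2/(d−2) − δ)β}` with `C = C(d, D)`. -/
theorem annealed_close_neighbours_bound
    (d : ℕ) (hd : 3 ≤ d)
    (D : Set (EuclideanSpace ℝ (Fin d))) (hDopen : IsOpen D) (hDbdd : IsBounded D) :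
    ∃ C > 0, ∀ (δ β : ℝ), δ ∈ Set.Ioc (0 : ℝ) (2 / ((d : ℝ) - 2)) → 0 < β →
      ∀ (Ω : Type) (_ : MeasurableSpace Ω) (P : Measure Ω), IsProbabilityMeasure P →
      ∀ (ρ : (Fin d → ℤ) → Ω → ℝ),
        (∀ z, Measurable (ρ z)) →
        (∀ z ω, 0 ≤ ρ z ω) →
        iIndepFun ρ P →
        (∀ z, IdentDistrib (ρ z) (ρ 0) P P) →
        (∫⁻ ω, ENNReal.ofReal (ρ 0 ω ^ ((d : ℝ) - 2 + β)) ∂P ≤ 1) →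
        ∀ ε : ℝ, ε ∈ Set.Ioo (0 : ℝ) 1 → ε ^ δ < 1 / 4 →
          (∫ ω, ε ^ (d : ℝ) *
              ∑' z : Fin d → ℤ,
                Set.indicator (Itilde d D ε δ (fun w => ρ w ω))
                  (fun w => ρ w ω ^ ((d : ℝ) - 2)) z ∂P)
            ≤ C * ε ^ ((2 / ((d : ℝ) - 2) - δ) * β) :=
  annealed_close_neighbours_bound_general d hd D hDbdd
end
end
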